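/- In the Bitcoin retargeting model, the variance of a blocktime after the first retargeting period equals N³β²/((N-1)²(N-2)δ²), which for δ = 1 strictly exceeds β² (the variance under constant difficulty) for all integers N > 2. -/

import Mathlib

/-!
With θ = Nβ/δ the integrand is the Lomax density of shape N and scale θ. Translating by θ and
expanding x / (x + θ)^(N+1) and x² / (x + θ)^(N+1) in partial fractions reduces both moments to
∫_θ^∞ u^-(k+1) du = 1 / (k θ^k), which gives E X = θ/(N-1) and E X² = 2θ²/((N-1)(N-2)).
The comparison with β² at δ = 1 is (N-1)²(N-2) < N³, i.e. 4N² - 5N + 2 > 0.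
-/

open MeasureTheory Real Set

theorem setIntegral_Ioi_comp_add_right {E : Type*} [NormedAddCommGroup E] [NormedSpace ℝ E]
    (f : ℝ → E) (a d : ℝ) : ∫ x in Ioi a, f (x + d) = ∫ x in Ioi (a + d), f x := by
  have h := (measurePreserving_add_right volume d).setIntegral_preimage_emb
    (measurableEmbedding_addRight d) f (Ioi (a + d))
  rwa [preimage_add_const_Ioi, add_sub_cancel_right] at h

theorem integrableOn_Ioi_comp_add_right_iff {E : Type*} [NormedAddCommGroup E]
    (f : ℝ → E) (a d : ℝ) :
    IntegrableOn (fun x => f (x + d)) (Ioi a) ↔ IntegrableOn f (Ioi (a + d)) := by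
  have h := (measurePreserving_add_right volume d).integrableOn_comp_preimage
    (measurableEmbedding_addRight d) (f := f) (s := Ioi (a + d))
  rwa [preimage_add_const_Ioi, add_sub_cancel_right] at h

theorem integrableOn_Ioi_inv_add_pow {θ : ℝ} (hθ : 0 < θ) {k : ℕ} (hk : 0 < k) :
    IntegrableOn (fun x => ((x + θ) ^ (k + 1))⁻¹) (Ioi 0) := by
  have hk' : (0 : ℝ) < k := by exact_mod_cast hk
  rw [integrableOn_Ioi_comp_add_right_iff (fun u => (u ^ (k + 1))⁻¹), zero_add]
  refine (integrableOn_Ioi_rpow_of_lt (a := -((k + 1 : ℕ) : ℝ)) ?_ hθ).congr_fun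
    (fun u _ => by simp only [rpow_neg_natCast, zpow_neg, zpow_natCast]) measurableSet_Ioi
  push_cast
  linarith

theorem integral_Ioi_inv_add_pow {θ : ℝ} (hθ : 0 < θ) {k : ℕ} (hk : 0 < k) :
    ∫ x in Ioi 0, ((x + θ) ^ (k + 1))⁻¹ = (k * θ ^ k)⁻¹ := by
  have hk' : (0 : ℝ) < k := by exact_mod_cast hk
  simp_rw [setIntegral_Ioi_comp_add_right (fun u => (u ^ (k + 1))⁻¹), zero_add, ← zpow_natCast,
    ← zpow_neg, ← rpow_intCast]
  rw [integral_Ioi_rpow_of_lt (by push_cast; linarith) hθ]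
  push_cast
  rw [show -(k + 1 : ℝ) + 1 = -k by ring, rpow_neg hθ.le, rpow_natCast, neg_div_neg_eq,
    div_eq_inv_mul, mul_inv]

noncomputable def lomaxPDF (n : ℕ) (θ x : ℝ) : ℝ := n * θ ^ n / (x + θ) ^ (n + 1)

theorem integral_mul_lomaxPDF {θ : ℝ} (hθ : 0 < θ) {n : ℕ} (hn : 1 < n) :
    ∫ x in Ioi 0, x * lomaxPDF n θ x = θ / (n - 1) := by
  obtain ⟨m, rfl⟩ : ∃ m, n = m + 2 := ⟨n - 2, by omega⟩
  have partial_fractions : ∀ x ∈ Ioi (0 : ℝ), x * lomaxPDF (m + 2) θ x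
      = (m + 2 : ℕ) * θ ^ (m + 2)
          * (((x + θ) ^ (m + 1 + 1))⁻¹ - θ * ((x + θ) ^ (m + 2 + 1))⁻¹) := by
    intro x hx
    have : x + θ ≠ 0 := by linarith [mem_Ioi.mp hx]
    unfold lomaxPDF
    field_simp
    ring
  rw [setIntegral_congr_fun measurableSet_Ioi partial_fractions, integral_const_mul,
    integral_sub (integrableOn_Ioi_inv_add_pow hθ (k := m + 1) (by omega))
      ((integrableOn_Ioi_inv_add_pow hθ (k := m + 2) (by omega)).const_mul θ),
    integral_const_mul, integral_Ioi_inv_add_pow hθ (k := m + 1) (by omega),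
    integral_Ioi_inv_add_pow hθ (k := m + 2) (by omega)]
  push_cast
  rw [show (m : ℝ) + 2 - 1 = m + 1 by ring]
  field_simp
  ring

theorem integral_sq_mul_lomaxPDF {θ : ℝ} (hθ : 0 < θ) {n : ℕ} (hn : 2 < n) :
    ∫ x in Ioi 0, x ^ 2 * lomaxPDF n θ x = 2 * θ ^ 2 / ((n - 1) * (n - 2)) := by
  obtain ⟨m, rfl⟩ : ∃ m, n = m + 3 := ⟨n - 3, by omega⟩
  have partial_fractions : ∀ x ∈ Ioi (0 : ℝ), x ^ 2 * lomaxPDF (m + 3) θ x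
      = (m + 3 : ℕ) * θ ^ (m + 3) * (((x + θ) ^ (m + 1 + 1))⁻¹
          - 2 * θ * ((x + θ) ^ (m + 2 + 1))⁻¹ + θ ^ 2 * ((x + θ) ^ (m + 3 + 1))⁻¹) := by
    intro x hx
    have : x + θ ≠ 0 := by linarith [mem_Ioi.mp hx]
    unfold lomaxPDF
    field_simp
    ring
  have h₁ := integrableOn_Ioi_inv_add_pow hθ (k := m + 1) (by omega)
  have h₂ := integrableOn_Ioi_inv_add_pow hθ (k := m + 2) (by omega)
  have h₃ := integrableOn_Ioi_inv_add_pow hθ (k := m + 3) (by omega)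
  rw [setIntegral_congr_fun measurableSet_Ioi partial_fractions, integral_const_mul,
    integral_add _ (h₃.const_mul _), integral_sub h₁ (h₂.const_mul _),
    integral_const_mul, integral_const_mul, integral_Ioi_inv_add_pow hθ (k := m + 1) (by omega),
    integral_Ioi_inv_add_pow hθ (k := m + 2) (by omega),
    integral_Ioi_inv_add_pow hθ (k := m + 3) (by omega)]
  · push_cast
    rw [show (m : ℝ) + 3 - 1 = m + 2 by ring, show (m : ℝ) + 3 - 2 = m + 1 by ring]
    field_simp
    ring
  · exact h₁.sub (h₂.const_mul _)

theorem lomaxPDF_variance {θ : ℝ} (hθ : 0 < θ) {n : ℕ} (hn : 2 < n) :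
    (∫ x in Ioi 0, x ^ 2 * lomaxPDF n θ x) - (∫ x in Ioi 0, x * lomaxPDF n θ x) ^ 2
      = n * θ ^ 2 / ((n - 1) ^ 2 * (n - 2)) := by
  have hn' : (2 : ℝ) < n := by exact_mod_cast hn
  have : (n : ℝ) - 1 ≠ 0 := by linarith
  have : (n : ℝ) - 2 ≠ 0 := by linarith
  rw [integral_sq_mul_lomaxPDF hθ hn, integral_mul_lomaxPDF hθ (by omega)]
  field_simp
  ring

theorem sub_one_sq_mul_sub_two_lt_cube (n : ℝ) : (n - 1) ^ 2 * (n - 2) < n ^ 3 := by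
  nlinarith [sq_nonneg (n - 5 / 8)]

/-- The variance of a post-retargeting blocktime (Lomax(N, θ), θ = Nβ/δ) equals
N³β²/((N-1)²(N-2)δ²), which for δ = 1 strictly exceeds β², for all integers N > 2. -/
theorem retarget_blocktime_variance (N : ℕ) (hN : 2 < N) (β δ : ℝ) (hβ : 0 < β) (hδ : 0 < δ) :
    ((∫ x in Ioi (0:ℝ), x ^ 2 * (N * (N * β / δ) ^ N / (x + N * β / δ) ^ (N + 1)))
      - (∫ x in Ioi (0:ℝ), x * (N * (N * β / δ) ^ N / (x + N * β / δ) ^ (N + 1))) ^ 2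
      = N ^ 3 * β ^ 2 / ((N - 1) ^ 2 * (N - 2) * δ ^ 2)) ∧
    (δ = 1 → N ^ 3 * β ^ 2 / ((N - 1) ^ 2 * (N - 2) * δ ^ 2) > β ^ 2) := by
  refine ⟨?_, fun hδ₁ => ?_⟩
  · have h := lomaxPDF_variance (θ := N * β / δ) (by positivity) hN
    unfold lomaxPDF at h
    rw [h]
    field_simp
  · have hN' : (2 : ℝ) < N := by exact_mod_cast hN
    have hN₁ : (0 : ℝ) < N - 1 := by linarith
    have hN₂ : (0 : ℝ) < N - 2 := by linarith
    rw [hδ₁, one_pow, mul_one, gt_iff_lt, lt_div_iff₀ (by positivity), mul_comm]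
    exact mul_lt_mul_of_pos_right (sub_one_sq_mul_sub_two_lt_cube N) (by positivity)
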